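/- arXiv:2010.08004 — 5 statements merged into one kernel-verified Lean document; each statement's English description precedes it below -/
import Mathlib

section
/- If P is a directed poset with calibre (ω₁, ω) (i.e., every subset of P of size ℵ₁ contains a countably infinite subset that is bounded above in P) and Q is a countable directed poset, then the product poset P × Q (with coordinatewise order) also has calibre (ω₁, ω). -/
/-- A directed poset `P` has calibre `(ω₁, ω)` if every subset of size `ℵ₁`
contains a countably infinite subset that is bounded above in `P`. -/
def HasCalibreOmega1Omega (P : Type*) [Preorder P] : Prop :=
  ∀ S : Set P, Cardinal.mk S = Cardinal.aleph 1 →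
    ∃ T ⊆ S, T.Countable ∧ T.Infinite ∧ BddAbove T

theorem stmt0 {P Q : Type*} [Preorder P] [Preorder Q]
    (hPdir : IsDirected P (· ≤ ·)) (hQdir : IsDirected Q (· ≤ ·))
    [Countable Q] (hP : HasCalibreOmega1Omega P) :
    HasCalibreOmega1Omega (P × Q) := by
  intro S hS
  set A : Q → Set P := fun q => {p | (p, q) ∈ S} with hA
  have hSeq : S = ⋃ q, (fun p => (p, q)) '' A q := by
    ext ⟨p, q⟩
    simp only [Set.mem_iUnion, Set.mem_image, hA, Set.mem_setOf_eq]
    constructor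
    · exact fun h => ⟨q, p, h, rfl⟩
    · rintro ⟨i, x, h, hx⟩
      obtain ⟨rfl, rfl⟩ := Prod.mk.injEq .. ▸ (Prod.mk.inj hx)
      exact h
  -- some fiber is uncountable
  have hne : ∃ q, ¬ (A q).Countable := by
    by_contra h
    push_neg at h
    have hc : S.Countable := by
      rw [hSeq]
      exact Set.countable_iUnion fun q => (h q).image _
    exact absurd hS ((Cardinal.countable_iff_lt_aleph_one S).mp hc).ne
  obtain ⟨q₀, hq₀⟩ := hne
  have h1 : Cardinal.aleph 1 ≤ Cardinal.mk (A q₀) := by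
    rw [← not_lt, ← Cardinal.countable_iff_lt_aleph_one]
    exact hq₀
  have h2 : Cardinal.mk (A q₀) ≤ Cardinal.aleph 1 := by
    have hemb : Nonempty ((A q₀) ↪ S) :=
      ⟨⟨fun p => ⟨(p.1, q₀), p.2⟩, by
        intro a b h
        simp only [Subtype.mk.injEq, Prod.mk.injEq] at h
        exact Subtype.ext h.1⟩⟩
    have hl := Cardinal.lift_mk_le'.mpr hemb
    rw [hS] at hl
    simpa using hl
  have hAcard : Cardinal.mk (A q₀) = Cardinal.aleph 1 := le_antisymm h2 h1
  obtain ⟨T, hTsub, hTc, hTinf, b, hb⟩ := hP (A q₀) hAcard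
  have hinj : Function.Injective (fun p : P => (p, q₀)) := fun a b h => by
    exact (Prod.mk.inj h).1
  refine ⟨(fun p : P => (p, q₀)) '' T, ?_, hTc.image _, hTinf.image hinj.injOn, ⟨(b, q₀), ?_⟩⟩
  · rintro x ⟨p, hp, rfl⟩
    exact hTsub hp
  · rintro x ⟨p, hp, rfl⟩
    exact ⟨hb hp, le_refl q₀⟩
end

section
/- Let X and Y be topological spaces and P a poset. If X has a P-base (i.e., every point of X has a neighborhood base (U_p)_{p∈P} indexed by P with U_p ⊆ U_{p'} whenever p ≥ p'), and f : X → Y is a continuous open surjection, then Y has a P-base. -/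
/-- `X` has a neighborhood `P`-base at `x`: a neighborhood base `(U p)` indexed by the
poset `P` with `U p ⊆ U p'` whenever `p' ≤ p`. -/
def HasNbhdPBase (P : Type*) [Preorder P] {X : Type*} [TopologicalSpace X] (x : X) : Prop :=
  ∃ U : P → Set X, (∀ p, U p ∈ nhds x) ∧ Antitone U ∧ ∀ V ∈ nhds x, ∃ p, U p ⊆ V

theorem stmt1 {X Y : Type*} [TopologicalSpace X] [TopologicalSpace Y]
    {P : Type*} [Preorder P] (f : X → Y)
    (hcont : Continuous f) (hopen : IsOpenMap f) (hsurj : Function.Surjective f)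
    (hX : ∀ x : X, HasNbhdPBase P x) :
    ∀ y : Y, HasNbhdPBase P y := by
  intro y
  obtain ⟨x, rfl⟩ := hsurj y
  obtain ⟨U, hU, hanti, hbase⟩ := hX x
  refine ⟨fun p => f '' U p, fun p => hopen.image_mem_nhds (hU p),
    fun p q hpq => Set.image_mono (hanti hpq), fun V hV => ?_⟩
  obtain ⟨p, hp⟩ := hbase (f ⁻¹' V) (hcont.continuousAt hV)
  exact ⟨p, Set.image_subset_iff.2 hp⟩
end

section
/- In the Bowtie space B (the plane ℝ² with the topology refining the Euclidean topology by declaring sets B(x,s) = {(x,0)} ∪ {(x',y) : |y| < s·|x−x'|} open for all x ∈ ℝ, s > 0), the family of translated parabola arcs K_x = {(x+a, a²) : a ∈ [−1,1]} for x ∈ ℝ consists of compact sets, but no infinite subfamily {K_{x_n} : n ∈ ℕ} with the x_n forming a strictly increasing convergent sequence has union contained in a compact subset of B. -/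
/-- The bowtie set `B(x,s) = {(x,0)} ∪ {(x',y) : |y| < s|x−x'|}`. -/
def bowtieSet (x s : ℝ) : Set (ℝ × ℝ) :=
  {((x : ℝ), (0 : ℝ))} ∪ {p : ℝ × ℝ | |p.2| < s * |p.1 - x|}

/-- The Bowtie topology on `ℝ²`: the Euclidean topology refined by all bowtie sets. -/
def BowtieTop : TopologicalSpace (ℝ × ℝ) :=
  TopologicalSpace.generateFrom
    ({U : Set (ℝ × ℝ) | IsOpen U} ∪ {B | ∃ x s : ℝ, 0 < s ∧ B = bowtieSet x s})

/-- The parabola arc `K₀` translated to `(x,0)`. -/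
def Kx (x : ℝ) : Set (ℝ × ℝ) :=
  {p | ∃ a ∈ Set.Icc (-1 : ℝ) 1, p = (x + a, a ^ 2)}

open Filter TopologicalSpace

lemma bowtie_le : BowtieTop ≤ (inferInstance : TopologicalSpace (ℝ × ℝ)) := by
  conv_rhs => rw [← @generateFrom_setOf_isOpen (ℝ × ℝ) inferInstance]
  exact generateFrom_anti Set.subset_union_left

lemma bowtie_isOpen (x s : ℝ) (hs : 0 < s) : @IsOpen _ BowtieTop (bowtieSet x s) :=
  TopologicalSpace.GenerateOpen.basic _ (Or.inr ⟨x, s, hs, rfl⟩)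

lemma kx_cont (x : ℝ) :
    @Continuous ℝ (ℝ × ℝ) _ BowtieTop (fun a => (x + a, a ^ 2)) := by
  rw [BowtieTop, continuous_generateFrom_iff]
  rintro U (hU | ⟨x', s, hs, rfl⟩)
  · exact (show IsOpen U from hU).preimage (by continuity)
  · by_cases hx : x = x'
    · subst hx
      have : (fun a => ((x + a, a ^ 2) : ℝ × ℝ)) ⁻¹' bowtieSet x s
          = {a : ℝ | |a| < s} := by
        ext a
        simp only [bowtieSet, Set.mem_preimage, Set.mem_union, Set.mem_singleton_iff,
          Set.mem_setOf_eq, Prod.mk.injEq]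
        constructor
        · rintro (⟨h1, h2⟩ | h)
          · have : a = 0 := by nlinarith [sq_nonneg a, abs_nonneg a]
            simpa [this]
          · rcases eq_or_ne a 0 with rfl | ha
            · simpa
            · have h2 : |a ^ 2| = |a| * |a| := by rw [sq, abs_mul]
              have h3 : x + a - x = a := by ring
              rw [h2, h3] at h
              have := abs_pos.mpr ha
              nlinarith
        · intro h
          rcases eq_or_ne a 0 with rfl | ha
          · exact Or.inl ⟨by ring, by ring⟩
          · right
            have h2 : |a ^ 2| = |a| * |a| := by rw [sq, abs_mul]
            have h3 : x + a - x = a := by ring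
            have := abs_pos.mpr ha
            rw [h2, h3]
            nlinarith
      rw [this]
      have : {a : ℝ | |a| < s} = (fun a : ℝ => |a|) ⁻¹' Set.Iio s := rfl
      rw [this]
      exact isOpen_Iio.preimage continuous_abs
    · have : (fun a => ((x + a, a ^ 2) : ℝ × ℝ)) ⁻¹' bowtieSet x' s
          = {a : ℝ | a ^ 2 < s * |x + a - x'|} := by
        ext a
        simp only [bowtieSet, Set.mem_preimage, Set.mem_union, Set.mem_singleton_iff,
          Set.mem_setOf_eq, Prod.mk.injEq]
        constructor
        · rintro (⟨h1, h2⟩ | h)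
          · exfalso
            have ha : a = 0 := by nlinarith [sq_nonneg a]
            apply hx
            rw [ha] at h1; linarith
          · rwa [abs_of_nonneg (sq_nonneg a)] at h
        · intro h
          right
          rwa [abs_of_nonneg (sq_nonneg a)]
      rw [this]
      exact isOpen_lt (by continuity) (by continuity)

theorem stmt7 :
    (∀ x : ℝ, @IsCompact _ BowtieTop (Kx x)) ∧
    (∀ (x : ℕ → ℝ) (c : ℝ), StrictMono x →
      Filter.Tendsto x Filter.atTop (nhds c) →
      ∀ L : Set (ℝ × ℝ), @IsCompact _ BowtieTop L → ¬ (⋃ n : ℕ, Kx (x n)) ⊆ L) := by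
  constructor
  · intro x
    have himg : Kx x = (fun a => ((x + a, a ^ 2) : ℝ × ℝ)) '' Set.Icc (-1) 1 := by
      ext p
      simp only [Kx, Set.mem_setOf_eq, Set.mem_image]
      constructor
      · rintro ⟨a, ha, rfl⟩; exact ⟨a, ha, rfl⟩
      · rintro ⟨a, ha, rfl⟩; exact ⟨a, ha, rfl⟩
    rw [himg]
    exact @IsCompact.image ℝ (ℝ × ℝ) _ BowtieTop _ _ isCompact_Icc (kx_cont x)
  · intro x c hmono hlim L hL hsub
    -- every term is below the limit
    have hlt : ∀ n, x n < c := by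
      intro n
      have h1 : x (n + 1) ≤ c := by
        apply ge_of_tendsto hlim
        filter_upwards [eventually_ge_atTop (n + 1)] with m hm
        exact hmono.monotone hm
      exact lt_of_lt_of_le (hmono (Nat.lt_succ_self n)) h1
    have h0 : Tendsto (fun n => c - x n) atTop (nhds 0) := by
      have := Filter.Tendsto.sub
        (tendsto_const_nhds : Tendsto (fun _ : ℕ => c) atTop (nhds c)) hlim
      simpa using this
    obtain ⟨N, hN⟩ : ∃ N, ∀ n ≥ N, c - x n ≤ 1 := by
      have := h0.eventually (ge_mem_nhds (show (0:ℝ) < 1 by norm_num))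
      rcases eventually_atTop.mp this with ⟨N, hN⟩
      exact ⟨N, fun n hn => (hN n hn)⟩
    set a : ℕ → ℝ := fun n => c - x (n + N) with ha
    have hapos : ∀ n, 0 < a n := fun n => sub_pos.mpr (hlt (n + N))
    set q : ℕ → ℝ × ℝ := fun n => (c, (a n) ^ 2) with hq
    have hqK : ∀ n, q n ∈ Kx (x (n + N)) := by
      intro n
      refine ⟨a n, ⟨by linarith [hapos n], hN (n + N) (Nat.le_add_left N n)⟩, ?_⟩
      simp only [hq, ha, Prod.mk.injEq]
      exact ⟨by ring, trivial⟩
    have hqL : ∀ n, q n ∈ L := fun n => hsub (Set.mem_iUnion.2 ⟨n + N, hqK n⟩)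
    have hFL : map q atTop ≤ Filter.principal L :=
      le_principal_iff.mpr (mem_map.mpr (Eventually.of_forall hqL))
    obtain ⟨p, hpL, hp⟩ := @IsCompact.exists_clusterPt _ BowtieTop _ hL _ (map_neBot) hFL
    -- cluster point in the Euclidean topology
    have hp' : (@nhds _ BowtieTop p ⊓ map q atTop).NeBot := hp
    have hpE : (nhds p ⊓ map q atTop).NeBot := by
      have h1 : @nhds _ BowtieTop p ⊓ map q atTop ≤ nhds p ⊓ map q atTop :=
        inf_le_inf_right _ (nhds_mono bowtie_le)
      exact hp'.mono h1
    -- q tends to (c,0) in the Euclidean topology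
    have ha0 : Tendsto a atTop (nhds 0) := h0.comp (tendsto_add_atTop_nat N)
    have hq0 : Tendsto q atTop (nhds ((c : ℝ), (0 : ℝ))) := by
      have h2 : Tendsto (fun n => (a n) ^ 2) atTop (nhds 0) := by
        have := ha0.pow 2
        simpa using this
      exact tendsto_const_nhds.prodMk_nhds h2
    have hpeq : p = ((c : ℝ), (0 : ℝ)) := by
      have h3 : (nhds p ⊓ nhds ((c : ℝ), (0 : ℝ))).NeBot :=
        hpE.mono (inf_le_inf_left _ hq0)
      exact eq_of_nhds_neBot h3
    subst hpeq
    -- contradiction with the bowtie neighborhood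
    have hU : bowtieSet c 1 ∈ @nhds _ BowtieTop ((c : ℝ), (0 : ℝ)) :=
      @IsOpen.mem_nhds (ℝ × ℝ) BowtieTop ((c : ℝ), (0 : ℝ)) (bowtieSet c 1)
        (bowtie_isOpen c 1 one_pos) (Or.inl rfl)
    have hR : Set.range q ∈ map q atTop := range_mem_map
    have hp2 : (@nhds _ BowtieTop ((c : ℝ), (0 : ℝ)) ⊓ map q atTop).NeBot := hp
    have hne : (bowtieSet c 1 ∩ Set.range q).Nonempty :=
      hp2.nonempty_of_mem (inter_mem_inf hU hR)
    obtain ⟨p', hpU, n, rfl⟩ := hne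
    rcases hpU with h | h
    · have : (a n) ^ 2 = 0 := by
        simpa [hq] using congrArg Prod.snd h
      nlinarith [hapos n]
    · simp only [hq, Set.mem_setOf_eq, sub_self, abs_zero, mul_zero] at h
      exact (abs_nonneg _).not_gt h
end

section
/- Let G be a topological group, H a closed normal subgroup, and suppose (G,H) is a good pair. Let P, Q, R be directed posets with an order-preserving map φ : R → P × Q whose image is cofinal. If H has a neighborhood P-base at the identity (in the subspace topology) and the quotient group G/H has a neighborhood Q-base at its identity, then G has a neighborhood R-base at the identity. -/
open Pointwise

/-!
The good-pair map `p` spreads a neighborhood `A` of `1` in `H` to the "tube"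
`T A = ⋃ {p B | B ∈ 𝓑, B ⊆ A}`, a neighborhood of `1` in `G`. If `U` is a `P`-base of `H`
and `W` a `Q`-base of `G ⧸ H`, then the sets `T (U i) ∩ π⁻¹ (W j)` form a `P × Q`-base of `G`:
a point `x` of a small tube lying in a small coset neighborhood `w H` satisfies
`w⁻¹ x ∈ p D * p D ∩ H ⊆ p B₁ ∩ H = B₁`, so `x ∈ w B₁` is close to `1`.
Composing with the cofinal map `φ` turns this base into an `R`-base.
-/

open Filter Topology

theorem HasNbhdPBase.of_monotone_of_cofinal {P R X : Type*} [Preorder P] [Preorder R]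
    [TopologicalSpace X] {x : X} (h : HasNbhdPBase P x) (φ : R → P) (hφ : Monotone φ)
    (hcof : ∀ i, ∃ r, i ≤ φ r) : HasNbhdPBase R x := by
  obtain ⟨U, hU, hUanti, hUbase⟩ := h
  refine ⟨U ∘ φ, fun r => hU (φ r), hUanti.comp_monotone hφ, fun V hV => ?_⟩
  obtain ⟨i, hi⟩ := hUbase V hV
  obtain ⟨r, hr⟩ := hcof i
  exact ⟨r, (hUanti hr).trans hi⟩

structure IsGoodPairMap {G : Type*} [Group G] [TopologicalSpace G] (H : Subgroup G)
    (𝓑 : Set (Set H)) (p : Set H → Set G) : Prop where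
  mem_nhds : ∀ B ∈ 𝓑, B ∈ 𝓝 (1 : H)
  exists_subset : ∀ V ∈ 𝓝 (1 : H), ∃ B ∈ 𝓑, B ⊆ V
  isOpen : ∀ B ∈ 𝓑, IsOpen (p B)
  inter_eq : ∀ B ∈ 𝓑, p B ∩ (H : Set G) = Subtype.val '' B
  mul_subset : ∀ B ∈ 𝓑, ∀ B' ∈ 𝓑, B * B ⊆ B' → p B * p B ⊆ p B'
  inv_subset : ∀ B ∈ 𝓑, ∀ B' ∈ 𝓑, B⁻¹ ⊆ B' → (p B)⁻¹ ⊆ p B'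

namespace IsGoodPairMap

variable {G : Type*} [Group G] {H : Subgroup G} {𝓑 : Set (Set H)} {p : Set H → Set G}

def tube (𝓑 : Set (Set H)) (p : Set H → Set G) (A : Set H) : Set G :=
  ⋃ B ∈ {B ∈ 𝓑 | B ⊆ A}, p B

theorem mem_tube {A : Set H} {g : G} : g ∈ tube 𝓑 p A ↔ ∃ B ∈ 𝓑, B ⊆ A ∧ g ∈ p B := by
  simp [tube, and_assoc]

theorem tube_mono : Monotone (tube 𝓑 p) := fun _ _ hAA' _ hg => by
  obtain ⟨B, hB, hBA, hgB⟩ := mem_tube.mp hg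
  exact mem_tube.mpr ⟨B, hB, hBA.trans hAA', hgB⟩

variable [TopologicalSpace G]

theorem mem_image_of_mem_subgroup (hp : IsGoodPairMap H 𝓑 p) {B : Set H} (hB : B ∈ 𝓑) {g : G}
    (hgB : g ∈ p B) (hgH : g ∈ H) : g ∈ Subtype.val '' B :=
  hp.inter_eq B hB ▸ ⟨hgB, hgH⟩

theorem one_mem (hp : IsGoodPairMap H 𝓑 p) {B : Set H} (hB : B ∈ 𝓑) : (1 : G) ∈ p B := by
  have h1 : ((1 : H) : G) ∈ p B ∩ (H : Set G) :=
    hp.inter_eq B hB ▸ ⟨1, mem_of_mem_nhds (hp.mem_nhds B hB), rfl⟩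
  exact h1.1

theorem tube_mem_nhds (hp : IsGoodPairMap H 𝓑 p) {A : Set H} (hA : A ∈ 𝓝 (1 : H)) :
    tube 𝓑 p A ∈ 𝓝 (1 : G) := by
  obtain ⟨B, hB, hBA⟩ := hp.exists_subset A hA
  exact mem_of_superset ((hp.isOpen B hB).mem_nhds (hp.one_mem hB))
    fun g hg => mem_tube.mpr ⟨B, hB, hBA, hg⟩

/-- `p` is not assumed monotone; two inversions replace monotonicity. -/
theorem subset_of_inv_subset_of_inv_subset (hp : IsGoodPairMap H 𝓑 p) {B E D : Set H}
    (hB : B ∈ 𝓑) (hE : E ∈ 𝓑) (hD : D ∈ 𝓑) (hBE : B⁻¹ ⊆ E) (hED : E⁻¹ ⊆ D) : p B ⊆ p D := by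
  intro g hg
  have hg' : g⁻¹ ∈ p E := hp.inv_subset B hB E hE hBE (by simpa using hg)
  simpa using hp.inv_subset E hE D hD hED (by simpa using hg')

variable [IsTopologicalGroup G]

theorem exists_tube_subset (hp : IsGoodPairMap H 𝓑 p) {V : Set G} (hV : V ∈ 𝓝 (1 : G)) :
    ∃ A ∈ 𝓝 (1 : H), ∃ W ∈ 𝓝 (1 : G),
      ∀ x ∈ tube 𝓑 p A, ∀ w ∈ W, w⁻¹ * x ∈ H → x ∈ V := by
  obtain ⟨V₁, hV₁, hV₁V⟩ := exists_nhds_one_split hV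
  obtain ⟨B₁, hB₁, hB₁V₁⟩ := hp.exists_subset (Subtype.val ⁻¹' V₁)
    (continuous_subtype_val.continuousAt.preimage_mem_nhds hV₁)
  obtain ⟨N, hN, hNN⟩ := exists_nhds_one_split (hp.mem_nhds B₁ hB₁)
  obtain ⟨D, hD, hDN⟩ := hp.exists_subset N hN
  have hDD : D * D ⊆ B₁ := by
    rintro _ ⟨a, ha, b, hb, rfl⟩
    exact hNN a (hDN ha) b (hDN hb)
  obtain ⟨E, hE, hED⟩ := hp.exists_subset D⁻¹ (inv_mem_nhds_one _ (hp.mem_nhds D hD))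
  have hE'D : E⁻¹ ⊆ D := by simpa using Set.inv_subset_inv.mpr hED
  refine ⟨E⁻¹, inv_mem_nhds_one _ (hp.mem_nhds E hE),
    V₁ ∩ (p D)⁻¹, inter_mem hV₁ (inv_mem_nhds_one _ ((hp.isOpen D hD).mem_nhds (hp.one_mem hD))),
    fun x hx w hw hwx => ?_⟩
  obtain ⟨B, hB, hBE, hxB⟩ := mem_tube.mp hx
  have hxD : x ∈ p D :=
    hp.subset_of_inv_subset_of_inv_subset hB hE hD (by simpa using Set.inv_subset_inv.mpr hBE)
      hE'D hxB
  have hwx₁ : w⁻¹ * x ∈ p B₁ := hp.mul_subset D hD B₁ hB₁ hDD (Set.mul_mem_mul hw.2 hxD)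
  obtain ⟨b, hb, hbx⟩ := hp.mem_image_of_mem_subgroup hB₁ hwx₁ hwx
  have hwxV₁ : w⁻¹ * x ∈ V₁ := hbx ▸ hB₁V₁ hb
  simpa using hV₁V w hw.1 _ hwxV₁

theorem hasNbhdPBase_prod (hp : IsGoodPairMap H 𝓑 p) {P Q : Type*} [Preorder P] [Preorder Q]
    (hH : HasNbhdPBase P (1 : H)) (hQ : HasNbhdPBase Q ((1 : G) : G ⧸ H)) :
    HasNbhdPBase (P × Q) (1 : G) := by
  obtain ⟨U, hU, hUanti, hUbase⟩ := hH
  obtain ⟨W, hW, hWanti, hWbase⟩ := hQ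
  refine ⟨fun i => tube 𝓑 p (U i.1) ∩ QuotientGroup.mk ⁻¹' W i.2,
    fun i => inter_mem (hp.tube_mem_nhds (hU i.1))
      (QuotientGroup.continuous_mk.continuousAt.preimage_mem_nhds (hW i.2)),
    fun i j hij => Set.inter_subset_inter (tube_mono (hUanti hij.1))
      (Set.preimage_mono (hWanti hij.2)),
    fun V hV => ?_⟩
  obtain ⟨A, hA, W₁, hW₁, hsub⟩ := hp.exists_tube_subset hV
  obtain ⟨i, hi⟩ := hUbase A hA
  obtain ⟨j, hj⟩ := hWbase _ (QuotientGroup.isOpenMap_coe.image_mem_nhds hW₁)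
  refine ⟨(i, j), fun x ⟨hxA, hxW⟩ => ?_⟩
  obtain ⟨w, hw, hwx⟩ := hj hxW
  exact hsub x (tube_mono hi hxA) w hw (QuotientGroup.eq.mp hwx)

end IsGoodPairMap

theorem stmt9_general {G : Type*} [Group G] [TopologicalSpace G] [IsTopologicalGroup G]
    (H : Subgroup G) [H.Normal]
    -- the good pair data: `𝓑` is a neighborhood base at the identity of `H`
    (𝓑 : Set (Set H)) (h𝓑nhds : ∀ B ∈ 𝓑, B ∈ nhds (1 : H))
    (h𝓑base : ∀ V ∈ nhds (1 : H), ∃ B ∈ 𝓑, B ⊆ V)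
    (p : Set H → Set G)
    (hopen : ∀ B ∈ 𝓑, IsOpen (p B))
    (hcap : ∀ B ∈ 𝓑, p B ∩ (H : Set G) = Subtype.val '' B)
    (hsq : ∀ B ∈ 𝓑, ∀ B' ∈ 𝓑, B * B ⊆ B' → p B * p B ⊆ p B')
    (hinv : ∀ B ∈ 𝓑, ∀ B' ∈ 𝓑, B⁻¹ ⊆ B' → (p B)⁻¹ ⊆ p B')
    {P Q R : Type*} [Preorder P] [Preorder Q] [Preorder R]
    (φ : R → P × Q) (hφ : Monotone φ) (hφcof : ∀ q : P × Q, ∃ r : R, q ≤ φ r)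
    (hHbase : HasNbhdPBase P (1 : H))
    (hQbase : HasNbhdPBase Q (1 : G ⧸ H)) :
    HasNbhdPBase R (1 : G) := by
  have hp : IsGoodPairMap H 𝓑 p := ⟨h𝓑nhds, h𝓑base, hopen, hcap, hsq, hinv⟩
  exact (hp.hasNbhdPBase_prod hHbase hQbase).of_monotone_of_cofinal φ hφ hφcof

theorem stmt9 {G : Type*} [Group G] [TopologicalSpace G] [IsTopologicalGroup G]
    (H : Subgroup G) [H.Normal] (hclosed : IsClosed (H : Set G))
    -- the good pair data: `𝓑` is a neighborhood base at the identity of `H`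
    (𝓑 : Set (Set H)) (h𝓑nhds : ∀ B ∈ 𝓑, B ∈ nhds (1 : H))
    (h𝓑base : ∀ V ∈ nhds (1 : H), ∃ B ∈ 𝓑, B ⊆ V)
    (p : Set H → Set G)
    (hopen : ∀ B ∈ 𝓑, IsOpen (p B))
    (hcap : ∀ B ∈ 𝓑, p B ∩ (H : Set G) = Subtype.val '' B)
    (hsq : ∀ B ∈ 𝓑, ∀ B' ∈ 𝓑, B * B ⊆ B' → p B * p B ⊆ p B')
    (hinv : ∀ B ∈ 𝓑, ∀ B' ∈ 𝓑, B⁻¹ ⊆ B' → (p B)⁻¹ ⊆ p B')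
    {P Q R : Type*} [Preorder P] [Preorder Q] [Preorder R]
    (hPdir : IsDirected P (· ≤ ·)) (hQdir : IsDirected Q (· ≤ ·))
    (hRdir : IsDirected R (· ≤ ·))
    (φ : R → P × Q) (hφ : Monotone φ) (hφcof : ∀ q : P × Q, ∃ r : R, q ≤ φ r)
    (hHbase : HasNbhdPBase P (1 : H))
    (hQbase : HasNbhdPBase Q (1 : G ⧸ H)) :
    HasNbhdPBase R (1 : G) :=
  stmt9_general H 𝓑 h𝓑nhds h𝓑base p hopen hcap hsq hinv φ hφ hφcof hHbase hQbase
end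

section
/- Let G be a topological group and H a closed normal subgroup of G that is first-countable (in the subspace topology). If the quotient group G/H has a P-base for a directed poset P with P ≥_T ω (e.g., P = ω^ω or P = 𝒦(M) for a noncompact separable metric space M), then G has a P × ω-base; in particular, if in addition P × ω ≤_T P, then G has a P-base. -/
/-! If `x ∈ O` lies in the same `H`-coset as some `w ∈ O ∩ V`, then `w⁻¹ * x ∈ O⁻¹ * O ∩ H`, and
once that trace is inside `V` we get `x ∈ V * V`. Since the quotient map is open, a base of `1`
in `G` is therefore given by intersecting preimages of a `P`-base of `G ⧸ H` with the terms of one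
decreasing sequence `O n` of neighbourhoods of `1` whose traces `(O n)⁻¹ * O n ∩ H` shrink to `1`
in `H`; first countability of `H` provides such a sequence. A monotone cofinal map `P → P × ℕ`
reindexes the resulting `P × ℕ`-base into a `P`-base. -/

open Filter Topology Pointwise Set

theorem hasNbhdPBase_iff {P : Type*} [Preorder P] {X : Type*} [TopologicalSpace X] {x : X} :
    HasNbhdPBase P x ↔ ∃ U : P → Set X, (𝓝 x).HasAntitoneBasis U := by
  refine ⟨fun ⟨U, hmem, hanti, hbase⟩ => ⟨U, ⟨⟨fun V => ?_⟩, hanti⟩⟩,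
    fun ⟨U, hU⟩ => ⟨U, hU.mem, hU.antitone, fun V hV => ?_⟩⟩
  · exact ⟨fun hV => (hbase V hV).imp fun _ h => ⟨trivial, h⟩,
      fun ⟨p, _, hp⟩ => mem_of_superset (hmem p) hp⟩
  · exact hU.mem_iff.1 hV

namespace Filter.HasAntitoneBasis

variable {α P Q : Type*} [Preorder P] [Preorder Q]

theorem inf {f g : Filter α} {u : P → Set α} {v : Q → Set α}
    (hu : f.HasAntitoneBasis u) (hv : g.HasAntitoneBasis v) :
    (f ⊓ g).HasAntitoneBasis fun q : P × Q => u q.1 ∩ v q.2 :=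
  ⟨(hu.toHasBasis.inf hv.toHasBasis).to_hasBasis (fun q _ => ⟨q, trivial, subset_rfl⟩)
      fun q _ => ⟨q, ⟨trivial, trivial⟩, subset_rfl⟩,
    fun _ _ h => inter_subset_inter (hu.antitone h.1) (hv.antitone h.2)⟩

theorem comp_cofinal {l : Filter α} {s : Q → Set α} (hs : l.HasAntitoneBasis s) {ψ : P → Q}
    (hψ : Monotone ψ) (hcof : ∀ q, ∃ p, q ≤ ψ p) : l.HasAntitoneBasis (s ∘ ψ) :=
  ⟨hs.toHasBasis.to_hasBasis
      (fun q _ => (hcof q).imp fun _ hp => ⟨trivial, hs.antitone hp⟩)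
      fun p _ => ⟨ψ p, trivial, subset_rfl⟩,
    hs.antitone.comp_monotone hψ⟩

end Filter.HasAntitoneBasis

namespace QuotientGroup

variable {G : Type*} [Group G]

theorem mk_preimage_image_inter_subset {H : Subgroup G} {O U : Set G}
    (h : O⁻¹ * O ∩ H ⊆ U) : ((↑) : G → G ⧸ H) ⁻¹' ((↑) '' (O ∩ U)) ∩ O ⊆ U * U := by
  rintro x ⟨⟨w, ⟨hwO, hwU⟩, hwx⟩, hxO⟩
  have hH : w⁻¹ * x ∈ H := QuotientGroup.eq.1 hwx
  exact ⟨w, hwU, w⁻¹ * x, h ⟨mul_mem_mul (inv_mem_inv.2 hwO) hxO, hH⟩, mul_inv_cancel_left w x⟩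

variable [TopologicalSpace G] [IsTopologicalGroup G]

theorem nhds_one_eq_comap_inf {H : Subgroup G} {L : Filter G} (hL : 𝓝 1 ≤ L)
    (hLH : ∀ U ∈ 𝓝 (1 : G), ∃ O ∈ L, O⁻¹ * O ∩ H ⊆ U) :
    𝓝 (1 : G) = comap ((↑) : G → G ⧸ H) (𝓝 ((1 : G) : G ⧸ H)) ⊓ L := by
  refine le_antisymm (le_inf continuous_mk.continuousAt.tendsto.le_comap hL) fun U hU => ?_
  obtain ⟨V, hV, -, -, hVU⟩ := exists_closed_nhds_one_inv_eq_mul_subset hU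
  obtain ⟨O, hO, hOV⟩ := hLH V hV
  have himage : ((↑) '' (O ∩ V) : Set (G ⧸ H)) ∈ 𝓝 ((1 : G) : G ⧸ H) := by
    rw [nhds_eq]
    exact image_mem_map (inter_mem (hL hO) hV)
  exact mem_of_superset (inter_mem_inf (preimage_mem_comap himage) hO)
    ((mk_preimage_image_inter_subset hOV).trans hVU)

theorem exists_isCountablyGenerated_inv_mul_inter_subset (H : Subgroup G)
    [FirstCountableTopology H] :
    ∃ L : Filter G, L.IsCountablyGenerated ∧ 𝓝 1 ≤ L ∧
      ∀ U ∈ 𝓝 (1 : G), ∃ O ∈ L, O⁻¹ * O ∩ H ⊆ U := by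
  obtain ⟨b, hb⟩ := (𝓝 (1 : H)).exists_antitone_basis
  have hC : ∀ n, ∃ C ∈ 𝓝 (1 : G), C⁻¹ * C ∩ H ⊆ (↑) '' b n := by
    intro n
    obtain ⟨t, ht, htb⟩ := (mem_nhds_subtype _ _ _).1 (hb.mem n)
    obtain ⟨C, hC, -, hCinv, hCt⟩ := exists_closed_nhds_one_inv_eq_mul_subset ht
    refine ⟨C, hC, fun x ⟨hx, hxH⟩ => ⟨⟨x, hxH⟩, htb ?_, rfl⟩⟩
    exact hCt (by rwa [hCinv] at hx)
  choose C hC hCb using hC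
  refine ⟨⨅ n, 𝓟 (C n), isCountablyGenerated_seq C, le_iInf fun n => le_principal_iff.2 (hC n),
    fun U hU => ?_⟩
  obtain ⟨n, hn⟩ := hb.mem_iff.1 (continuous_subtype_val.continuousAt.preimage_mem_nhds hU)
  exact ⟨C n, mem_iInf_of_mem n (mem_principal_self _),
    (hCb n).trans (image_subset_iff.2 hn)⟩

end QuotientGroup

theorem stmt10_general {G : Type*} [Group G] [TopologicalSpace G] [IsTopologicalGroup G]
    (H : Subgroup G) [H.Normal]
    [FirstCountableTopology H]
    {P : Type*} [Preorder P]
    (hQbase : HasNbhdPBase P (1 : G ⧸ H)) :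
    HasNbhdPBase (P × ℕ) (1 : G) ∧
      ((∃ ψ : P → P × ℕ, Monotone ψ ∧ ∀ q : P × ℕ, ∃ p : P, q ≤ ψ p) →
        HasNbhdPBase P (1 : G)) := by
  obtain ⟨V, hV⟩ := hasNbhdPBase_iff.1 hQbase
  obtain ⟨L, _, hL, hLH⟩ := QuotientGroup.exists_isCountablyGenerated_inv_mul_inter_subset H
  obtain ⟨O, hO⟩ := L.exists_antitone_basis
  have hbase : (𝓝 (1 : G)).HasAntitoneBasis fun q : P × ℕ => (↑) ⁻¹' V q.1 ∩ O q.2 := by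
    rw [QuotientGroup.nhds_one_eq_comap_inf hL hLH]
    exact (hV.comap _).inf hO
  exact ⟨hasNbhdPBase_iff.2 ⟨_, hbase⟩,
    fun ⟨ψ, hψ, hcof⟩ => hasNbhdPBase_iff.2 ⟨_, hbase.comp_cofinal hψ hcof⟩⟩

theorem stmt10 {G : Type*} [Group G] [TopologicalSpace G] [IsTopologicalGroup G]
    (H : Subgroup G) [H.Normal] (hclosed : IsClosed (H : Set G))
    [FirstCountableTopology H]
    {P : Type*} [Preorder P] (hPdir : IsDirected P (· ≤ ·))
    (hPω : ∃ f : P → ℕ, Monotone f ∧ ∀ n : ℕ, ∃ p : P, n ≤ f p)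
    (hQbase : HasNbhdPBase P (1 : G ⧸ H)) :
    HasNbhdPBase (P × ℕ) (1 : G) ∧
      ((∃ ψ : P → P × ℕ, Monotone ψ ∧ ∀ q : P × ℕ, ∃ p : P, q ≤ ψ p) →
        HasNbhdPBase P (1 : G)) :=
  stmt10_general H hQbase
end
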